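/- arXiv:1611.06462 — 2 statements merged into one kernel-verified Lean document; each statement's English description precedes it below -/
import Mathlib

section
/- Let μ₁ and μ₂ be finite positive regular Borel measures on a locally compact Hausdorff space X with S := supp(μ₁) ∩ supp(μ₂) ≠ ∅. Suppose there exist a point x ∈ S, an open neighborhood N of x, and constants m, M > 0 such that m ≤ μ₂(N_x)/μ₁(N_x) ≤ M for every open set N_x with x ∈ N_x ⊆ N. Then inf(μ₁, μ₂) ≠ 0. -/
open MeasureTheory

/-!
If `μ₁ ⊓ μ₂ = 0`, the measures are mutually singular: `μ₁ A = 0` and `μ₂ Aᶜ = 0` for some `A`.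
Say `x ∈ A`. Outer regularity of `μ₁` gives an open `U ⊇ A ∩ N` of arbitrarily small
`μ₁`-measure, while `U ∩ N` carries all of `μ₂ N > 0`; this contradicts `μ₂ ≤ M μ₁` on small
neighborhoods of `x`. The case `x ∈ Aᶜ` is the same argument with the roles of the measures
swapped, using `μ₁ ≤ m⁻¹ μ₂`.
-/

/-- The support of a Borel measure: the set of points all of whose open neighborhoods have
positive measure. -/
def measSupport {X : Type*} [TopologicalSpace X] [MeasurableSpace X] (μ : Measure X) :
    Set X :=
  {x | ∀ G : Set X, IsOpen G → x ∈ G → 0 < μ G}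

theorem notMem_of_mutuallySingular_of_le_mul_on_nhds {X : Type*} [TopologicalSpace X]
    [MeasurableSpace X] {μ ν : Measure X} [μ.OuterRegular] {A N : Set X} {x : X} {C : ENNReal}
    (hμA : μ A = 0) (hνA : ν Aᶜ = 0) (hx : x ∈ measSupport ν) (hN : IsOpen N) (hxN : x ∈ N)
    (hC : C ≠ ⊤) (hle : ∀ U : Set X, IsOpen U → x ∈ U → U ⊆ N → ν U ≤ C * μ U) :
    x ∉ A := by
  intro hxA
  obtain ⟨ε, hε, hεC⟩ := ENNReal.exists_pos_mul_lt hC (hx N hN hxN).ne'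
  have hAN : μ (A ∩ N) < ε := (measure_mono_null Set.inter_subset_left hμA).symm ▸ hε
  obtain ⟨U, hAU, hU, hμU⟩ := Set.exists_isOpen_lt_of_lt (A ∩ N) ε hAN
  have hxU : x ∈ U ∩ N := ⟨hAU ⟨hxA, hxN⟩, hxN⟩
  have : ν N < ν N :=
    calc ν N = ν (N ∩ A) := (measure_inter_conull hνA).symm
      _ ≤ ν (U ∩ N) := measure_mono fun y hy => ⟨hAU ⟨hy.2, hy.1⟩, hy.1⟩
      _ ≤ C * μ (U ∩ N) := hle _ (hU.inter hN) hxU Set.inter_subset_right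
      _ ≤ ε * C := by
        rw [mul_comm]
        gcongr
        exact (measure_mono Set.inter_subset_left).trans hμU.le
      _ < ν N := hεC
  exact lt_irrefl _ this

theorem inf_ne_zero_of_comparable_on_support_general
    {X : Type*} [TopologicalSpace X] [MeasurableSpace X]
    (μ₁ μ₂ : Measure X) [IsFiniteMeasure μ₁] [μ₁.Regular] [μ₂.Regular]
    (x : X) (hx : x ∈ measSupport μ₁ ∩ measSupport μ₂)
    (N : Set X) (hN : IsOpen N) (hxN : x ∈ N)
    (m M : ℝ) (hm : 0 < m)
    (hratio : ∀ Nx : Set X, IsOpen Nx → x ∈ Nx → Nx ⊆ N →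
      ENNReal.ofReal m ≤ μ₂ Nx / μ₁ Nx ∧ μ₂ Nx / μ₁ Nx ≤ ENNReal.ofReal M) :
    μ₁ ⊓ μ₂ ≠ 0 := by
  intro h0
  obtain ⟨A, -, hμ₁A, hμ₂A⟩ := Measure.mutuallySingular_of_disjoint (disjoint_iff.mpr h0)
  have hm' : ENNReal.ofReal m ≠ 0 := ENNReal.ofReal_pos.mpr hm |>.ne'
  have hupper : ∀ U, IsOpen U → x ∈ U → U ⊆ N → μ₂ U ≤ ENNReal.ofReal M * μ₁ U :=
    fun U hU hxU hUN => (ENNReal.div_le_iff_le_mul (Or.inl (hx.1 U hU hxU).ne')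
      (Or.inl (measure_ne_top μ₁ U))).mp (hratio U hU hxU hUN).2
  have hlower : ∀ U, IsOpen U → x ∈ U → U ⊆ N → μ₁ U ≤ (ENNReal.ofReal m)⁻¹ * μ₂ U := by
    intro U hU hxU hUN
    rw [← ENNReal.div_eq_inv_mul,
      ENNReal.le_div_iff_mul_le (Or.inl hm') (Or.inl ENNReal.ofReal_ne_top), mul_comm]
    exact (ENNReal.le_div_iff_mul_le (Or.inl (hx.1 U hU hxU).ne')
      (Or.inl (measure_ne_top μ₁ U))).mp (hratio U hU hxU hUN).1
  have hxA : x ∉ A := notMem_of_mutuallySingular_of_le_mul_on_nhds hμ₁A hμ₂A hx.2 hN hxN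
    ENNReal.ofReal_ne_top hupper
  have hxAc : x ∉ Aᶜ := notMem_of_mutuallySingular_of_le_mul_on_nhds hμ₂A
    (by rwa [compl_compl]) hx.1 hN hxN (ENNReal.inv_ne_top.mpr hm') hlower
  exact hxAc hxA

/-- Let `μ₁`, `μ₂` be finite positive regular Borel measures on a locally compact Hausdorff
space with `S := supp μ₁ ∩ supp μ₂ ≠ ∅`.  If there are `x ∈ S`, an open neighborhood `N` of
`x` and constants `m, M > 0` with `m ≤ μ₂(Nₓ)/μ₁(Nₓ) ≤ M` for every open `Nₓ` with
`x ∈ Nₓ ⊆ N`, then `inf (μ₁, μ₂) ≠ 0`. -/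
theorem inf_ne_zero_of_comparable_on_support
    {X : Type*} [TopologicalSpace X] [LocallyCompactSpace X] [T2Space X]
    [MeasurableSpace X] [BorelSpace X]
    (μ₁ μ₂ : Measure X) [IsFiniteMeasure μ₁] [IsFiniteMeasure μ₂]
    [μ₁.Regular] [μ₂.Regular]
    (hS : (measSupport μ₁ ∩ measSupport μ₂).Nonempty)
    (x : X) (hx : x ∈ measSupport μ₁ ∩ measSupport μ₂)
    (N : Set X) (hN : IsOpen N) (hxN : x ∈ N)
    (m M : ℝ) (hm : 0 < m) (hM : 0 < M)
    (hratio : ∀ Nx : Set X, IsOpen Nx → x ∈ Nx → Nx ⊆ N →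
      ENNReal.ofReal m ≤ μ₂ Nx / μ₁ Nx ∧ μ₂ Nx / μ₁ Nx ≤ ENNReal.ofReal M) :
    μ₁ ⊓ μ₂ ≠ 0 :=
  inf_ne_zero_of_comparable_on_support_general μ₁ μ₂ x hx N hN hxN m M hm hratio
end

section
/- Suppose θ and δ are finite Blaschke products, and ω is an inner function satisfying at least one of: (i) ω is a nonconstant finite Blaschke product; (ii) 𝒵(θ) ∪ 𝒵(δ) ⊆ ⋃{R(ω, z₀) : z₀ ∈ 𝕋 is a singularity of ω}. Then θ and δ are coprime if and only if θ∘ω and δ∘ω are coprime. -/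
open MeasureTheory Complex

noncomputable section

instance : Fact (0 < 2 * Real.pi) := ⟨Real.two_pi_pos⟩

/-- The boundary point `e^{is}` of the unit circle corresponding to `s : ℝ/2πℤ`. -/
def bdry (s : AddCircle (2 * Real.pi)) : ℂ := (AddCircle.toCircle s : ℂ)

/-- An inner function: a bounded holomorphic function on the open unit disc whose radial
limits exist and have modulus one almost everywhere on the unit circle. -/
def InnerDisc (θ : ℂ → ℂ) : Prop :=
  DifferentiableOn ℂ θ (Metric.ball (0 : ℂ) 1) ∧
  (∃ C : ℝ, ∀ z ∈ Metric.ball (0 : ℂ) 1, ‖θ z‖ ≤ C) ∧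
  ∀ᵐ s ∂(volume : Measure (AddCircle (2 * Real.pi))),
    ∃ L : ℂ, ‖L‖ = 1 ∧
      Filter.Tendsto (fun r : ℝ => θ ((r : ℂ) * bdry s)) (nhdsWithin 1 (Set.Iio 1)) (nhds L)

/-- `ω` is an inner divisor of `θ`: `θ = ω · θ'` on the disc for some inner `θ'`. -/
def InnerDivides (ω θ : ℂ → ℂ) : Prop :=
  InnerDisc ω ∧ ∃ θ' : ℂ → ℂ, InnerDisc θ' ∧ ∀ z ∈ Metric.ball (0 : ℂ) 1, θ z = ω z * θ' z

/-- Two inner functions are *coprime* if their only common inner divisors are unimodular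
constants. -/
def CoprimeInner (θ₁ θ₂ : ℂ → ℂ) : Prop :=
  ∀ ω : ℂ → ℂ, InnerDivides ω θ₁ → InnerDivides ω θ₂ →
    ∃ c : ℂ, ‖c‖ = 1 ∧ ∀ z ∈ Metric.ball (0 : ℂ) 1, ω z = c

/-- The Blaschke factor `b_α(z) = (z − α)/(1 − ᾱ z)`. -/
def blaschkeFactor (α z : ℂ) : ℂ := (z - α) / (1 - (starRingEnd ℂ) α * z)

/-- A finite Blaschke product `c ∏_{j=1}^d b_{α_j}` with `|c| = 1` and `α_j ∈ 𝔻`. -/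
def IsFiniteBlaschke (θ : ℂ → ℂ) : Prop :=
  ∃ (c : ℂ) (d : ℕ) (α : Fin d → ℂ), ‖c‖ = 1 ∧ (∀ j, ‖α j‖ < 1) ∧
    ∀ z ∈ Metric.ball (0 : ℂ) 1, θ z = c * ∏ j, blaschkeFactor (α j) z

/-- The zero set of `θ` in the open unit disc. -/
def zeroSet (θ : ℂ → ℂ) : Set ℂ := {z | z ∈ Metric.ball (0 : ℂ) 1 ∧ θ z = 0}

/-- `z₀` is a singularity of `ω` if `ω` has no analytic extension to a neighborhood of
`z₀`. -/
def HasSingularityAt (ω : ℂ → ℂ) (z₀ : ℂ) : Prop :=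
  ¬ ∃ (U : Set ℂ) (g : ℂ → ℂ), IsOpen U ∧ z₀ ∈ U ∧ DifferentiableOn ℂ g U ∧
      Set.EqOn g ω (U ∩ Metric.ball (0 : ℂ) 1)

/-- The range set `R(f, z₀) = ⋂_{r > 0} f(𝔻 ∩ Δ(z₀, r))`. -/
def rangeSet (f : ℂ → ℂ) (z₀ : ℂ) : Set ℂ :=
  ⋂ r ∈ Set.Ioi (0 : ℝ), f '' (Metric.ball (0 : ℂ) 1 ∩ Metric.ball z₀ r)

/-!
A finite Blaschke product is holomorphic near the closed disc and unimodular on the circle, so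
if `θ` and `δ` have no common zero then `‖θ‖ + ‖δ‖ ≥ m > 0` on the disc by compactness, and the
same bound holds for `θ ∘ φ` and `δ ∘ φ` whenever `φ` maps the disc into itself. A common inner
divisor `u` of two such functions satisfies `‖u‖ ≥ m / 2`, so `1 / u` is inner too; since inner
functions are bounded by one (Cauchy's formula applied to the powers `f ^ n`), `u` is a
unimodular constant. By the maximum principle an inner `ω` either maps the disc into itself or
is constant, and in the latter case `θ ∘ ω` and `δ ∘ ω` are constants.

Conversely, a common zero `a` of `θ` and `δ` makes `b_a ∘ ω` a common inner divisor of `θ ∘ ω`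
and `δ ∘ ω`, which is non-constant as soon as `ω` is; under either alternative `ω` is
non-constant, as a constant function has no boundary singularities.
-/

local notation "𝔻" => Metric.ball (0 : ℂ) 1

open Set Filter Topology Metric ComplexConjugate Real Interval

lemma bdry_coe (t : ℝ) : bdry t = exp (t * I) := by
  rw [bdry, AddCircle.toCircle_apply_mk, div_self two_pi_pos.ne', one_mul, Circle.coe_exp]

lemma norm_bdry (s : AddCircle (2 * π)) : ‖bdry s‖ = 1 := Circle.norm_coe _

lemma ae_Ioc_of_ae_addCircle {T : ℝ} [Fact (0 < T)] {p : AddCircle T → Prop}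
    (h : ∀ᵐ s, p s) : ∀ᵐ t : ℝ, t ∈ Ioc 0 T → p t := by
  have := (AddCircle.measurePreserving_mk T 0).quasiMeasurePreserving.ae h
  rwa [zero_add, ae_restrict_iff' measurableSet_Ioc] at this

lemma norm_circleMap_smul_inv_sub_smul_le {z₀ w : ℂ} {r ρ : ℝ} (hρ : ‖z₀‖ < ρ)
    (hρr : ρ ≤ r) (hr : r ≤ 1) (t : ℝ) :
    ‖(circleMap 0 r t * I) • ((circleMap 0 r t - z₀)⁻¹ • w)‖ ≤ ‖w‖ / (ρ - ‖z₀‖) := by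
  have habs : |r| = r := abs_of_pos (by linarith [norm_nonneg z₀])
  have hdist : ρ - ‖z₀‖ ≤ ‖circleMap 0 r t - z₀‖ := by
    have := norm_sub_norm_le (circleMap 0 r t) z₀
    rw [norm_circleMap_zero, habs] at this
    linarith
  rw [norm_smul, norm_smul, norm_mul, norm_I, mul_one, norm_circleMap_zero, habs, norm_inv,
    div_eq_inv_mul]
  calc r * (‖circleMap 0 r t - z₀‖⁻¹ * ‖w‖) ≤ 1 * ((ρ - ‖z₀‖)⁻¹ * ‖w‖) := by
        gcongr
    _ = (ρ - ‖z₀‖)⁻¹ * ‖w‖ := one_mul _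

lemma cauchy_formula_of_tendsto_radial {f : ℂ → ℂ} (hd : DifferentiableOn ℂ f 𝔻)
    {C : ℝ} (hC : ∀ z ∈ 𝔻, ‖f z‖ ≤ C) {L : ℝ → ℂ}
    (hL : ∀ᵐ t : ℝ, t ∈ Ι 0 (2 * π) →
      Tendsto (fun r : ℝ => f (circleMap 0 r t)) (𝓝[<] 1) (𝓝 (L t)))
    {z₀ : ℂ} (hz₀ : z₀ ∈ 𝔻) :
    ∫ t in (0)..2 * π, (circleMap 0 1 t * I) • ((circleMap 0 1 t - z₀)⁻¹ • L t)
      = (2 * π * I : ℂ) • f z₀ := by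
  obtain ⟨r₀, hr₀, hr₀1⟩ := exists_between (mem_ball_zero_iff.1 hz₀)
  have hnear : ∀ᶠ r in 𝓝[<] (1 : ℝ), r ∈ Ioo r₀ 1 := Ioo_mem_nhdsLT hr₀1
  have hmem : ∀ r ∈ Ioo r₀ 1, ∀ t, circleMap 0 r t ∈ 𝔻 := fun r hr t => by
    rw [mem_ball_zero_iff, norm_circleMap_zero, abs_of_pos (by linarith [hr.1, norm_nonneg z₀])]
    exact hr.2
  have hcauchy : ∀ r ∈ Ioo r₀ 1, ∫ t in (0)..2 * π,
      (circleMap 0 r t * I) • ((circleMap 0 r t - z₀)⁻¹ • f (circleMap 0 r t))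
        = (2 * π * I : ℂ) • f z₀ := fun r hr => by
    have := (hd.diffContOnCl_ball (closedBall_subset_ball hr.2)).circleIntegral_sub_inv_smul
      (mem_ball_zero_iff.2 (hr₀.trans hr.1))
    simpa only [circleIntegral, deriv_circleMap] using this
  -- Let `r → 1⁻` in the Cauchy formula on the circle of radius `r` (dominated convergence).
  refine tendsto_nhds_unique ?_
    (tendsto_const_nhds.congr' (eventually_of_mem hnear fun r hr => (hcauchy r hr).symm))
  refine intervalIntegral.tendsto_integral_filter_of_dominated_convergence
    (fun _ => C / (r₀ - ‖z₀‖)) ?_ ?_ intervalIntegrable_const ?_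
  · filter_upwards [hnear] with r hr
    have hcm := continuous_circleMap 0 r
    exact ((hcm.mul continuous_const).smul
      ((continuous_circleMap_inv (mem_ball_zero_iff.2 (hr₀.trans hr.1))).smul
        (hd.continuousOn.comp_continuous hcm (hmem r hr)))).aestronglyMeasurable
  · filter_upwards [hnear] with r hr
    refine ae_of_all _ fun t _ => ?_
    refine (norm_circleMap_smul_inv_sub_smul_le hr₀ hr.1.le hr.2.le t).trans ?_
    exact div_le_div_of_nonneg_right (hC _ (hmem r hr t)) (by linarith)
  · filter_upwards [hL] with t ht htI
    have hcirc : Tendsto (fun r : ℝ => circleMap 0 r t) (𝓝[<] 1) (𝓝 (circleMap 0 1 t)) := by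
      have : Continuous fun r : ℝ => circleMap 0 r t := by
        simp only [circleMap_zero]; fun_prop
      exact this.continuousAt.tendsto.mono_left nhdsWithin_le_nhds
    have hne : circleMap 0 1 t - z₀ ≠ 0 :=
      sub_ne_zero.2 (circleMap_ne_mem_ball hz₀ t)
    exact (hcirc.mul_const I).smul (((hcirc.sub_const z₀).inv₀ hne).smul (ht htI))

lemma norm_le_inv_one_sub_norm_of_radial_limits {f : ℂ → ℂ} (hd : DifferentiableOn ℂ f 𝔻)
    {C : ℝ} (hC : ∀ z ∈ 𝔻, ‖f z‖ ≤ C)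
    (hlim : ∀ᵐ t : ℝ, t ∈ Ioc 0 (2 * π) → ∃ L : ℂ, ‖L‖ ≤ 1 ∧
      Tendsto (fun r : ℝ => f (circleMap 0 r t)) (𝓝[<] 1) (𝓝 L))
    {z₀ : ℂ} (hz₀ : z₀ ∈ 𝔻) : ‖f z₀‖ ≤ (1 - ‖z₀‖)⁻¹ := by
  set L : ℝ → ℂ := fun t => limUnder (𝓝[<] 1) fun r : ℝ => f (circleMap 0 r t)
  rw [← uIoc_of_le two_pi_pos.le] at hlim
  have hL : ∀ᵐ t : ℝ, t ∈ Ι 0 (2 * π) → ‖L t‖ ≤ 1 ∧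
      Tendsto (fun r : ℝ => f (circleMap 0 r t)) (𝓝[<] 1) (𝓝 (L t)) := by
    filter_upwards [hlim] with t ht htI
    obtain ⟨L₀, hL₀1, hL₀⟩ := ht htI
    rw [show L t = L₀ from hL₀.limUnder_eq]
    exact ⟨hL₀1, hL₀⟩
  have hbound := intervalIntegral.norm_integral_le_of_norm_le_const_ae (C := (1 - ‖z₀‖)⁻¹)
    (f := fun t => (circleMap 0 1 t * I) • ((circleMap 0 1 t - z₀)⁻¹ • L t)) <| by
    filter_upwards [hL] with t ht htI
    refine (norm_circleMap_smul_inv_sub_smul_le (mem_ball_zero_iff.1 hz₀) le_rfl le_rfl t).trans ?_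
    rw [div_eq_inv_mul]
    exact mul_le_of_le_one_right (inv_nonneg.2 (by linarith [mem_ball_zero_iff.1 hz₀])) (ht htI).1
  have h2π : ‖(2 * π * I : ℂ)‖ = 2 * π := by simp [pi_pos.le]
  rw [cauchy_formula_of_tendsto_radial hd hC (hL.mono fun t ht htI => (ht htI).2) hz₀, norm_smul,
    h2π, sub_zero, abs_of_pos two_pi_pos, mul_comm] at hbound
  exact le_of_mul_le_mul_right hbound two_pi_pos

namespace InnerDisc

lemma norm_le_one {f : ℂ → ℂ} (hf : InnerDisc f) : ∀ z ∈ 𝔻, ‖f z‖ ≤ 1 := by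
  obtain ⟨hd, ⟨C, hC⟩, hae⟩ := hf
  intro z₀ hz₀
  have hpow : ∀ n : ℕ, ‖f z₀‖ ^ n ≤ (1 - ‖z₀‖)⁻¹ := fun n => by
    rw [← norm_pow]
    refine norm_le_inv_one_sub_norm_of_radial_limits (f := f ^ n) (hd.pow n) (C := C ^ n)
      (fun z hz => ?_) ?_ hz₀
    · rw [Pi.pow_apply, norm_pow]
      exact pow_le_pow_left₀ (norm_nonneg _) (hC z hz) n
    · filter_upwards [ae_Ioc_of_ae_addCircle hae] with t ht htI
      obtain ⟨L, hL, hlim⟩ := ht htI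
      refine ⟨L ^ n, by rw [norm_pow, hL, one_pow], ?_⟩
      simpa only [Pi.pow_apply, circleMap_zero, ← bdry_coe] using hlim.pow n
  -- The bound does not depend on `n`, which is only possible if `‖f z₀‖ ≤ 1`.
  by_contra! h
  obtain ⟨n, hn⟩ := (tendsto_pow_atTop_atTop_of_one_lt h).eventually_gt_atTop (1 - ‖z₀‖)⁻¹ |>.exists
  exact (hpow n).not_gt hn

lemma exists_ne_zero {f : ℂ → ℂ} (hf : InnerDisc f) : ∃ z ∈ 𝔻, f z ≠ 0 := by
  by_contra! h
  obtain ⟨s, L, hL, hlim⟩ := hf.2.2.exists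
  have hzero : ∀ᶠ r : ℝ in 𝓝[<] 1, f (r * bdry s) = 0 := by
    filter_upwards [Ioo_mem_nhdsLT zero_lt_one] with r hr
    refine h _ (mem_ball_zero_iff.2 ?_)
    rw [norm_mul, norm_bdry, mul_one, norm_real, Real.norm_of_nonneg hr.1.le]
    exact hr.2
  rw [tendsto_nhds_unique hlim (tendsto_const_nhds.congr' (hzero.mono fun r hr => hr.symm)),
    norm_zero] at hL
  exact zero_ne_one hL

lemma mapsTo_or_eqOn_const {f : ℂ → ℂ} (hf : InnerDisc f) :
    MapsTo f 𝔻 𝔻 ∨ ∃ c : ℂ, ∀ z ∈ 𝔻, f z = c := by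
  refine or_iff_not_imp_left.2 fun h => ?_
  obtain ⟨z₀, hz₀, hfz₀⟩ := not_forall₂.1 h
  rw [mem_ball_zero_iff, not_lt] at hfz₀
  have hmax : IsMaxOn (norm ∘ f) 𝔻 z₀ := fun z hz => (hf.norm_le_one z hz).trans hfz₀
  exact ⟨f z₀, Complex.eqOn_of_isPreconnected_of_isMaxOn_norm (convex_ball 0 1).isPreconnected
    isOpen_ball hf.1 hz₀ hmax⟩

lemma inv_of_le_norm {f : ℂ → ℂ} (hf : InnerDisc f) {m : ℝ} (hm : 0 < m)
    (h : ∀ z ∈ 𝔻, m ≤ ‖f z‖) : InnerDisc fun z => (f z)⁻¹ := by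
  have hne : ∀ z ∈ 𝔻, f z ≠ 0 := fun z hz => norm_pos_iff.1 (hm.trans_le (h z hz))
  refine ⟨hf.1.inv hne, ⟨m⁻¹, fun z hz => ?_⟩, ?_⟩
  · rw [norm_inv]
    exact inv_anti₀ hm (h z hz)
  · filter_upwards [hf.2.2] with s ⟨L, hL, hlim⟩
    exact ⟨L⁻¹, by rw [norm_inv, hL, inv_one], hlim.inv₀ (norm_ne_zero_iff.1 (hL ▸ one_ne_zero))⟩

lemma exists_eq_const_of_le_norm {f : ℂ → ℂ} (hf : InnerDisc f) {m : ℝ} (hm : 0 < m)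
    (h : ∀ z ∈ 𝔻, m ≤ ‖f z‖) : ∃ c : ℂ, ‖c‖ = 1 ∧ ∀ z ∈ 𝔻, f z = c := by
  have hone : ∀ z ∈ 𝔻, ‖f z‖ = 1 := fun z hz => by
    have hinv := (hf.inv_of_le_norm hm h).norm_le_one z hz
    rw [norm_inv, inv_le_one₀ (hm.trans_le (h z hz))] at hinv
    exact (hf.norm_le_one z hz).antisymm hinv
  have h0 : (0 : ℂ) ∈ 𝔻 := mem_ball_self one_pos
  rcases hf.mapsTo_or_eqOn_const with hD | ⟨c, hc⟩
  · exact absurd (mem_ball_zero_iff.1 (hD h0)) (hone 0 h0).not_lt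
  · exact ⟨c, hc 0 h0 ▸ hone 0 h0, hc⟩

lemma comp {F g : ℂ → ℂ} (hg : InnerDisc g)
    (hF : ∀ w ∈ closedBall (0 : ℂ) 1, DifferentiableAt ℂ F w) (hF1 : ∀ w, ‖w‖ = 1 → ‖F w‖ = 1) :
    InnerDisc (F ∘ g) := by
  have hgD : ∀ z ∈ 𝔻, g z ∈ closedBall (0 : ℂ) 1 := fun z hz =>
    mem_closedBall_zero_iff.2 (hg.norm_le_one z hz)
  refine ⟨fun z hz => (hF _ (hgD z hz)).comp_differentiableWithinAt z (hg.1 z hz), ?_, ?_⟩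
  · obtain ⟨C, hC⟩ := (isCompact_closedBall (0 : ℂ) 1).exists_bound_of_continuousOn
      fun w hw => (hF w hw).continuousAt.continuousWithinAt
    exact ⟨C, fun z hz => hC _ (hgD z hz)⟩
  · filter_upwards [hg.2.2] with s ⟨L, hL, hlim⟩
    exact ⟨F L, hF1 L hL,
      (hF L (mem_closedBall_zero_iff.2 hL.le)).continuousAt.tendsto.comp hlim⟩

end InnerDisc

lemma innerDisc_id : InnerDisc fun z => z := by
  refine ⟨differentiableOn_id, ⟨1, fun z hz => (mem_ball_zero_iff.1 hz).le⟩, ae_of_all _ fun s => ?_⟩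
  refine ⟨bdry s, norm_bdry s, ?_⟩
  simpa using ((continuous_ofReal.tendsto 1).mono_left nhdsWithin_le_nhds).mul_const (bdry s)

lemma InnerDivides.exists_ne_zero {u X : ℂ → ℂ} (h : InnerDivides u X) : ∃ z ∈ 𝔻, X z ≠ 0 := by
  obtain ⟨hu, v, hv, hX⟩ := h
  obtain ⟨z₁, hz₁, hu₁⟩ := hu.exists_ne_zero
  obtain ⟨z₂, hz₂, hv₂⟩ := hv.exists_ne_zero
  by_contra! hX0
  have hv_near : v =ᶠ[𝓝 z₁] 0 := by
    filter_upwards [(hu.1.continuousOn.continuousAt (isOpen_ball.mem_nhds hz₁)).eventually_ne hu₁,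
      isOpen_ball.mem_nhds hz₁] with z hu hz
    exact (mul_eq_zero.1 ((hX z hz).symm.trans (hX0 z hz))).resolve_left hu
  exact hv₂ ((hv.1.analyticOnNhd isOpen_ball).eqOn_zero_of_preconnected_of_eventuallyEq_zero
    (convex_ball 0 1).isPreconnected hz₁ hv_near hz₂)

namespace CoprimeInner

lemma of_le_norm_add_norm {X Y : ℂ → ℂ} {m : ℝ} (hm : 0 < m)
    (h : ∀ z ∈ 𝔻, m ≤ ‖X z‖ + ‖Y z‖) : CoprimeInner X Y := by
  rintro u ⟨hu, v, hv, hX⟩ ⟨-, w, hw, hY⟩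
  refine hu.exists_eq_const_of_le_norm (half_pos hm) fun z hz => ?_
  have hXu : ‖X z‖ ≤ ‖u z‖ := by
    rw [hX z hz, norm_mul]
    exact mul_le_of_le_one_right (norm_nonneg _) (hv.norm_le_one z hz)
  have hYu : ‖Y z‖ ≤ ‖u z‖ := by
    rw [hY z hz, norm_mul]
    exact mul_le_of_le_one_right (norm_nonneg _) (hw.norm_le_one z hz)
  linarith [h z hz]

lemma of_eqOn_const {X Y : ℂ → ℂ} {b b' : ℂ} (hX : ∀ z ∈ 𝔻, X z = b) (hY : ∀ z ∈ 𝔻, Y z = b') :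
    CoprimeInner X Y := by
  by_cases h0 : b = 0 ∧ b' = 0
  · intro u hu _
    obtain ⟨z, hz, hXz⟩ := hu.exists_ne_zero
    exact absurd ((hX z hz).trans h0.1) hXz
  · refine of_le_norm_add_norm (m := ‖b‖ + ‖b'‖) ?_ fun z hz => by rw [hX z hz, hY z hz]
    contrapose! h0
    constructor <;> rw [← norm_eq_zero] <;> linarith [norm_nonneg b, norm_nonneg b']

end CoprimeInner

section BlaschkeFactor

variable {α : ℂ}

lemma one_sub_conj_mul_ne_zero (hα : ‖α‖ < 1) {z : ℂ} (hz : ‖z‖ ≤ 1) : 1 - conj α * z ≠ 0 := by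
  rw [sub_ne_zero]
  intro h
  have := congrArg norm h
  rw [norm_one, norm_mul, RCLike.norm_conj] at this
  nlinarith [norm_nonneg z, norm_nonneg α]

lemma differentiableAt_blaschkeFactor (hα : ‖α‖ < 1) {z : ℂ} (hz : ‖z‖ ≤ 1) :
    DifferentiableAt ℂ (blaschkeFactor α) z :=
  (differentiableAt_id.sub_const α).div ((differentiableAt_id.const_mul _).const_sub 1)
    (one_sub_conj_mul_ne_zero hα hz)

lemma norm_blaschkeFactor_eq_one (hα : ‖α‖ < 1) {z : ℂ} (hz : ‖z‖ = 1) :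
    ‖blaschkeFactor α z‖ = 1 := by
  have hzα : z - α ≠ 0 := sub_ne_zero.2 fun h => by rw [h] at hz; linarith
  have hden : 1 - conj α * z = z * conj (z - α) := by
    have hzz : z * conj z = 1 := by rw [mul_conj, normSq_eq_norm_sq, hz]; norm_num
    rw [map_sub, mul_sub, hzz]
    ring
  rw [blaschkeFactor, norm_div, hden, norm_mul, hz, one_mul, RCLike.norm_conj,
    div_self (norm_ne_zero_iff.2 hzα)]

lemma blaschkeFactor_eq_zero_iff (hα : ‖α‖ < 1) {z : ℂ} (hz : ‖z‖ ≤ 1) :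
    blaschkeFactor α z = 0 ↔ z = α := by
  rw [blaschkeFactor, div_eq_zero_iff, sub_eq_zero, or_iff_left (one_sub_conj_mul_ne_zero hα hz)]

lemma blaschkeFactor_injOn (hα : ‖α‖ < 1) : InjOn (blaschkeFactor α) (closedBall 0 1) := by
  intro z hz w hw h
  rw [mem_closedBall_zero_iff] at hz hw
  rw [blaschkeFactor, blaschkeFactor,
    div_eq_div_iff (one_sub_conj_mul_ne_zero hα hz) (one_sub_conj_mul_ne_zero hα hw)] at h
  have hfac : (z - w) * (1 - conj α * α) = 0 := by linear_combination h
  exact sub_eq_zero.1 ((mul_eq_zero.1 hfac).resolve_right (one_sub_conj_mul_ne_zero hα hα.le))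

end BlaschkeFactor

def blaschkeProd {ι : Type*} (c : ℂ) (α : ι → ℂ) (s : Finset ι) (z : ℂ) : ℂ :=
  c * ∏ j ∈ s, blaschkeFactor (α j) z

section BlaschkeProd

variable {ι : Type*} {c : ℂ} {α : ι → ℂ} {s : Finset ι}

lemma differentiableAt_blaschkeProd (hα : ∀ j, ‖α j‖ < 1) {z : ℂ} (hz : ‖z‖ ≤ 1) :
    DifferentiableAt ℂ (blaschkeProd c α s) z :=
  (DifferentiableAt.fun_finsetProd fun j _ => differentiableAt_blaschkeFactor (hα j) hz).const_mul c

lemma norm_blaschkeProd_eq_one (hc : ‖c‖ = 1) (hα : ∀ j, ‖α j‖ < 1) {z : ℂ} (hz : ‖z‖ = 1) :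
    ‖blaschkeProd c α s z‖ = 1 := by
  rw [blaschkeProd, norm_mul, hc, one_mul, norm_prod,
    Finset.prod_eq_one fun j _ => norm_blaschkeFactor_eq_one (hα j) hz]

lemma InnerDisc.blaschkeProd_comp {g : ℂ → ℂ} (hg : InnerDisc g) (hc : ‖c‖ = 1)
    (hα : ∀ j, ‖α j‖ < 1) : InnerDisc (blaschkeProd c α s ∘ g) :=
  hg.comp (fun _ hw => differentiableAt_blaschkeProd hα (mem_closedBall_zero_iff.1 hw))
    fun _ hw => norm_blaschkeProd_eq_one hc hα hw

end BlaschkeProd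

namespace IsFiniteBlaschke

variable {θ δ : ℂ → ℂ}

lemma innerDivides_comp (hθ : IsFiniteBlaschke θ) {ω : ℂ → ℂ} (hω : InnerDisc ω)
    (hωD : MapsTo ω 𝔻 𝔻) {a : ℂ} (ha : a ∈ zeroSet θ) :
    InnerDivides (blaschkeFactor a ∘ ω) (θ ∘ ω) := by
  obtain ⟨c, d, α, hc, hα, hθ⟩ := hθ
  have hprod : ∏ j, blaschkeFactor (α j) a = 0 := by
    have h0 := ha.2
    rw [hθ a ha.1] at h0
    exact (mul_eq_zero.1 h0).resolve_left (norm_ne_zero_iff.1 (hc ▸ one_ne_zero))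
  obtain ⟨j₀, -, hj₀⟩ := Finset.prod_eq_zero_iff.1 hprod
  have haj₀ : α j₀ = a :=
    ((blaschkeFactor_eq_zero_iff (hα j₀) (mem_ball_zero_iff.1 ha.1).le).1 hj₀).symm
  have ha1 : ‖a‖ < 1 := haj₀ ▸ hα j₀
  refine ⟨hω.comp (fun _ hw => differentiableAt_blaschkeFactor ha1 (mem_closedBall_zero_iff.1 hw))
      (fun _ hw => norm_blaschkeFactor_eq_one ha1 hw),
    blaschkeProd c α (Finset.univ.erase j₀) ∘ ω, hω.blaschkeProd_comp hc hα, fun z hz => ?_⟩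
  simp only [Function.comp_apply]
  rw [hθ _ (hωD hz), ← Finset.mul_prod_erase _ _ (Finset.mem_univ j₀), haj₀, blaschkeProd]
  ring

lemma exists_pos_le_norm_add_norm (hθ : IsFiniteBlaschke θ) (hδ : IsFiniteBlaschke δ)
    (hdisj : Disjoint (zeroSet θ) (zeroSet δ)) : ∃ m > 0, ∀ w ∈ 𝔻, m ≤ ‖θ w‖ + ‖δ w‖ := by
  obtain ⟨c, d, α, hc, hα, hθ⟩ := hθ
  obtain ⟨c', d', α', -, hα', hδ⟩ := hδ
  set P := blaschkeProd c α Finset.univ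
  set Q := blaschkeProd c' α' Finset.univ
  have hcont : ContinuousOn (fun w => ‖P w‖ + ‖Q w‖) (closedBall 0 1) := fun w hw =>
    have hw' := mem_closedBall_zero_iff.1 hw
    ((differentiableAt_blaschkeProd hα hw').continuousAt.norm.add
      (differentiableAt_blaschkeProd hα' hw').continuousAt.norm).continuousWithinAt
  obtain ⟨w₀, hw₀, hmin⟩ :=
    (isCompact_closedBall (0 : ℂ) 1).exists_isMinOn (nonempty_closedBall.2 zero_le_one) hcont
  refine ⟨‖P w₀‖ + ‖Q w₀‖, ?_, fun w hw => ?_⟩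
  · by_contra! hle
    have hP : P w₀ = 0 := norm_eq_zero.1 (by linarith [norm_nonneg (P w₀), norm_nonneg (Q w₀)])
    have hQ : Q w₀ = 0 := norm_eq_zero.1 (by linarith [norm_nonneg (P w₀), norm_nonneg (Q w₀)])
    have hw₀D : w₀ ∈ 𝔻 := by
      refine mem_ball_zero_iff.2 ((mem_closedBall_zero_iff.1 hw₀).lt_of_ne fun h => ?_)
      have : ‖P w₀‖ = 1 := norm_blaschkeProd_eq_one hc hα h
      rw [hP, norm_zero] at this
      exact zero_ne_one this
    exact hdisj.ne_of_mem ⟨hw₀D, (hθ w₀ hw₀D).trans hP⟩ ⟨hw₀D, (hδ w₀ hw₀D).trans hQ⟩ rfl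
  · rw [hθ w hw, hδ w hw]
    exact hmin (ball_subset_closedBall hw)

lemma coprimeInner_comp (hθ : IsFiniteBlaschke θ) (hδ : IsFiniteBlaschke δ)
    (hdisj : Disjoint (zeroSet θ) (zeroSet δ)) {φ : ℂ → ℂ} (hφ : MapsTo φ 𝔻 𝔻) :
    CoprimeInner (θ ∘ φ) (δ ∘ φ) :=
  have ⟨_m, hm, h⟩ := exists_pos_le_norm_add_norm hθ hδ hdisj
  CoprimeInner.of_le_norm_add_norm hm fun _ hz => h _ (hφ hz)

lemma disjoint_zeroSet_of_coprimeInner_comp (hθ : IsFiniteBlaschke θ) (hδ : IsFiniteBlaschke δ)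
    {ω : ℂ → ℂ} (hω : InnerDisc ω) (hnc : ¬∃ c : ℂ, ∀ z ∈ 𝔻, ω z = c)
    (h : CoprimeInner (θ ∘ ω) (δ ∘ ω)) : Disjoint (zeroSet θ) (zeroSet δ) := by
  have hωD : MapsTo ω 𝔻 𝔻 := hω.mapsTo_or_eqOn_const.resolve_right hnc
  refine Set.disjoint_left.2 fun a haθ haδ => hnc ⟨ω 0, fun z hz => ?_⟩
  obtain ⟨c, -, hc⟩ := h _ (hθ.innerDivides_comp hω hωD haθ) (hδ.innerDivides_comp hω hωD haδ)
  have h0 : (0 : ℂ) ∈ 𝔻 := mem_ball_self one_pos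
  exact blaschkeFactor_injOn (mem_ball_zero_iff.1 haθ.1) (ball_subset_closedBall (hωD hz))
    (ball_subset_closedBall (hωD h0)) ((hc z hz).trans (hc 0 h0).symm)

end IsFiniteBlaschke

lemma HasSingularityAt.not_exists_eqOn_const {ω : ℂ → ℂ} {z₀ : ℂ} (h : HasSingularityAt ω z₀) :
    ¬∃ c : ℂ, ∀ z ∈ 𝔻, ω z = c := fun ⟨c, hc⟩ =>
  h ⟨univ, fun _ => c, isOpen_univ, mem_univ _, differentiableOn_const c,
    fun w hw => (hc w hw.2).symm⟩

/-- Suppose `θ` and `δ` are finite Blaschke products and `ω` is an inner function which is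
either a nonconstant finite Blaschke product, or whose range sets at its boundary
singularities cover `𝒵(θ) ∪ 𝒵(δ)`.  Then `θ` and `δ` are coprime iff `θ∘ω` and `δ∘ω`
are coprime. -/
theorem coprime_comp_iff (θ δ ω : ℂ → ℂ)
    (hθ : IsFiniteBlaschke θ) (hδ : IsFiniteBlaschke δ) (hω : InnerDisc ω)
    (hcase :
      (IsFiniteBlaschke ω ∧ ¬ ∃ c : ℂ, ∀ z ∈ Metric.ball (0 : ℂ) 1, ω z = c) ∨
      (zeroSet θ ∪ zeroSet δ ⊆
        ⋃ z₀ ∈ {z₀ : ℂ | ‖z₀‖ = 1 ∧ HasSingularityAt ω z₀}, rangeSet ω z₀)) :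
    CoprimeInner θ δ ↔ CoprimeInner (θ ∘ ω) (δ ∘ ω) := by
  constructor
  · intro h
    have hid : ¬∃ c : ℂ, ∀ z ∈ 𝔻, z = c := fun ⟨c, hc⟩ =>
      absurd ((hc (1 / 2) (by norm_num)).trans (hc 0 (mem_ball_self one_pos)).symm) (by norm_num)
    have hdisj := hθ.disjoint_zeroSet_of_coprimeInner_comp hδ innerDisc_id hid h
    rcases hω.mapsTo_or_eqOn_const with hωD | ⟨c, hc⟩
    · exact hθ.coprimeInner_comp hδ hdisj hωD
    · exact CoprimeInner.of_eqOn_const (fun z hz => congrArg θ (hc z hz))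
        (fun z hz => congrArg δ (hc z hz))
  · intro h
    refine hθ.coprimeInner_comp hδ (Set.disjoint_left.2 fun a haθ haδ => ?_) (mapsTo_id 𝔻)
    have hnc : ¬∃ c : ℂ, ∀ z ∈ 𝔻, ω z = c := by
      refine hcase.elim And.right fun hsub => ?_
      obtain ⟨z₀, ⟨-, hsing⟩, -⟩ := mem_iUnion₂.1 (hsub (Or.inl haθ))
      exact hsing.not_exists_eqOn_const
    exact Set.disjoint_left.1 (hθ.disjoint_zeroSet_of_coprimeInner_comp hδ hω hnc h) haθ haδ
end
end
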